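/- The zero-weight space of the (-1)-eigenspace g^1 of ν with respect to the Cartan subalgebra h^0 of g^0 has dimension l. -/
import Mathlib


noncomputable section

/-- The involution `ν` of `gl_{2l+1}` as a linear map. -/
def nuLin (n : ℕ) :
    Matrix (Fin n) (Fin n) ℂ →ₗ[ℂ] Matrix (Fin n) (Fin n) ℂ where
  toFun x := Matrix.of fun p q => -((-1 : ℂ) ^ (p.val + q.val)) * x q.rev p.rev
  map_add' x y := by
    ext p q
    simp [Matrix.add_apply]
    ring
  map_smul' c x := by
    ext p q
    simp [Matrix.smul_apply]
    ring

/-- The fixed-point subalgebra `g⁰`. -/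
def g0 (n : ℕ) : Submodule ℂ (Matrix (Fin n) (Fin n) ℂ) :=
  LinearMap.ker (Matrix.traceLinearMap (Fin n) ℂ ℂ) ⊓
    LinearMap.ker (nuLin n - LinearMap.id)

/-- The `(-1)`-eigenspace `g¹`. -/
def g1 (n : ℕ) : Submodule ℂ (Matrix (Fin n) (Fin n) ℂ) :=
  LinearMap.ker (Matrix.traceLinearMap (Fin n) ℂ ℂ) ⊓
    LinearMap.ker (nuLin n + LinearMap.id)

/-- The diagonal matrices, as a submodule. -/
def diagSub (n : ℕ) : Submodule ℂ (Matrix (Fin n) (Fin n) ℂ) where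
  carrier := {x | x.IsDiag}
  add_mem' ha hb := ha.add hb
  zero_mem' := Matrix.isDiag_zero
  smul_mem' c x hx := hx.smul c

/-- The Cartan subalgebra `h⁰ = h ∩ g⁰` of `g⁰`. -/
def h0 (n : ℕ) : Submodule ℂ (Matrix (Fin n) (Fin n) ℂ) := diagSub n ⊓ g0 n

/-- The zero-weight space of `g¹` with respect to `h⁰`:
`{x ∈ g¹ : [h, x] = 0 for all h ∈ h⁰}`. -/
def zeroWt (n : ℕ) : Submodule ℂ (Matrix (Fin n) (Fin n) ℂ) :=
  g1 n ⊓ ⨅ h ∈ h0 n, LinearMap.ker (LinearMap.mulLeft ℂ h - LinearMap.mulRight ℂ h)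


-- membership unfolding lemmas
lemma mem_zeroWt_iff (n : ℕ) (x : Matrix (Fin n) (Fin n) ℂ) :
    x ∈ zeroWt n ↔ (x.trace = 0 ∧ nuLin n x + x = 0) ∧
      ∀ h ∈ h0 n, h * x = x * h := by
  simp [zeroWt, g1, Submodule.mem_inf, LinearMap.mem_ker, LinearMap.add_apply,
    LinearMap.sub_apply, Submodule.mem_iInf, sub_eq_zero, LinearMap.mulLeft_apply,
    LinearMap.mulRight_apply]

lemma mem_h0_iff (n : ℕ) (x : Matrix (Fin n) (Fin n) ℂ) :
    x ∈ h0 n ↔ x.IsDiag ∧ x.trace = 0 ∧ nuLin n x = x := by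
  simp [h0, g0, diagSub, Submodule.mem_inf, LinearMap.mem_ker, LinearMap.sub_apply,
    sub_eq_zero, Submodule.mem_mk]


namespace ZWaux

-- nuLin entrywise
lemma nuLin_apply (n : ℕ) (x : Matrix (Fin n) (Fin n) ℂ) (p q : Fin n) :
    nuLin n x p q = -((-1 : ℂ) ^ (p.val + q.val)) * x q.rev p.rev := rfl

-- the test diagonal elements of h0
def eF (l : ℕ) (i : Fin l) : Fin (2 * l + 1) → ℂ :=
  fun p => if p.val = i.val then 1 else if p.val = 2 * l - i.val then -1 else 0

lemma eF_mem (l : ℕ) (i : Fin l) : Matrix.diagonal (eF l i) ∈ h0 (2 * l + 1) := by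
  rw [mem_h0_iff]
  refine ⟨Matrix.isDiag_diagonal _, ?_, ?_⟩
  · rw [Matrix.trace_diagonal]
    have hi := i.isLt
    have key : ∀ (j : ℕ) (hj : j < 2 * l + 1) (c : ℂ),
        ∑ p : Fin (2 * l + 1), (if p.val = j then c else 0) = c := by
      intro j hj c
      rw [Finset.sum_eq_single (⟨j, hj⟩ : Fin (2 * l + 1))]
      · simp
      · intro b _ hb
        exact if_neg (fun hc => hb (Fin.ext hc))
      · simp
    have h1 : ∀ p : Fin (2 * l + 1), eF l i p =
        (if p.val = i.val then (1 : ℂ) else 0) +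
        (if p.val = 2 * l - i.val then (-1 : ℂ) else 0) := by
      intro p
      have hp := p.isLt
      unfold eF
      split_ifs <;> first | ring1 | (exfalso; omega)
    rw [Finset.sum_congr rfl (fun p _ => h1 p), Finset.sum_add_distrib,
      key i.val (by omega), key (2 * l - i.val) (by omega)]
    ring
  · ext p q
    have hi := i.isLt
    have hp := p.isLt
    have hq := q.isLt
    rw [nuLin_apply]
    rcases eq_or_ne p q with h | h
    · subst h
      have hrev : Matrix.diagonal (eF l i) p.rev p.rev = eF l i p.rev :=
        Matrix.diagonal_apply_eq _ _
      rw [hrev, Matrix.diagonal_apply_eq]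
      have hpow : ((-1 : ℂ)) ^ (p.val + p.val) = 1 := Even.neg_one_pow ⟨p.val, by ring⟩
      rw [hpow]
      have hrv : (p.rev : ℕ) = 2 * l - p.val := by rw [Fin.val_rev]; omega
      unfold eF
      rw [hrv]
      rcases eq_or_ne p.val i.val with h1 | h1
      · rw [if_pos h1, if_neg (by omega), if_pos (by omega)]; ring
      · rw [if_neg h1]
        rcases eq_or_ne p.val (2 * l - i.val) with h2 | h2
        · rw [if_pos h2, if_pos (by omega)]; ring
        · rw [if_neg h2, if_neg (by omega), if_neg (by omega)]; ring
    · have : q.rev ≠ p.rev := fun hc => h (Fin.rev_injective hc).symm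
      rw [Matrix.diagonal_apply_ne _ this, Matrix.diagonal_apply_ne _ h]
      ring


lemma exists_sep (l : ℕ) (p q : Fin (2 * l + 1)) (hl : 0 < l) (hne : p ≠ q) :
    ∃ i : Fin l, eF l i p ≠ eF l i q := by
  have hp := p.isLt
  have hq := q.isLt
  have hpq : p.val ≠ q.val := fun h => hne (Fin.ext h)
  by_cases h1 : p.val < l
  · refine ⟨⟨p.val, h1⟩, ?_⟩
    unfold eF
    simp only [Fin.val_mk]
    split_ifs <;> first | (exfalso; omega) | norm_num
  · by_cases h2 : q.val < l
    · refine ⟨⟨q.val, h2⟩, ?_⟩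
      unfold eF
      simp only [Fin.val_mk]
      split_ifs <;> first | (exfalso; omega) | norm_num
    · by_cases h3 : l < p.val
      · refine ⟨⟨2 * l - p.val, by omega⟩, ?_⟩
        unfold eF
        simp only [Fin.val_mk]
        split_ifs <;> first | (exfalso; omega) | norm_num
      · refine ⟨⟨2 * l - q.val, by omega⟩, ?_⟩
        unfold eF
        simp only [Fin.val_mk]
        split_ifs <;> first | (exfalso; omega) | norm_num

lemma zeroWt_offdiag (l : ℕ) (hl : 0 < l) (x : Matrix (Fin (2*l+1)) (Fin (2*l+1)) ℂ)
    (hx : x ∈ zeroWt (2 * l + 1)) (p q : Fin (2 * l + 1)) (hne : p ≠ q) :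
    x p q = 0 := by
  rw [mem_zeroWt_iff] at hx
  obtain ⟨i, hi⟩ := exists_sep l p q hl hne
  have hc : Matrix.diagonal (eF l i) * x = x * Matrix.diagonal (eF l i) :=
    hx.2 _ (eF_mem l i)
  have h2 : eF l i p * x p q = x p q * eF l i q := by
    have h := Matrix.ext_iff.mpr hc p q
    rwa [Matrix.diagonal_mul, Matrix.mul_diagonal] at h
  have h3 : (eF l i p - eF l i q) * x p q = 0 := by linear_combination h2
  exact (mul_eq_zero.mp h3).resolve_left (sub_ne_zero_of_ne hi)

lemma zeroWt_symm (l : ℕ) (x : Matrix (Fin (2*l+1)) (Fin (2*l+1)) ℂ)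
    (hx : x ∈ zeroWt (2 * l + 1)) (p : Fin (2 * l + 1)) :
    x p p = x p.rev p.rev := by
  rw [mem_zeroWt_iff] at hx
  have h := Matrix.ext_iff.mpr hx.1.2 p p
  rw [Matrix.add_apply, nuLin_apply] at h
  have hpow : ((-1 : ℂ)) ^ (p.val + p.val) = 1 := Even.neg_one_pow ⟨p.val, by ring⟩
  rw [hpow] at h
  simp at h
  linear_combination h


def dN (l : ℕ) (c : Fin l → ℂ) (j : ℕ) : ℂ :=
  if h : min j (2 * l - j) < l then c ⟨min j (2 * l - j), h⟩ else -2 * ∑ i, c i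

lemma dN_lt (l : ℕ) (c : Fin l → ℂ) (j : ℕ) (hj : j < l) :
    dN l c j = c ⟨j, hj⟩ := by
  unfold dN
  simp only [show min j (2 * l - j) = j from by omega]
  rw [dif_pos hj]

lemma dN_mid (l : ℕ) (c : Fin l → ℂ) : dN l c l = -2 * ∑ i, c i := by
  unfold dN
  simp only [show min l (2 * l - l) = l from by omega]
  rw [dif_neg (by omega)]

lemma dN_symm (l : ℕ) (c : Fin l → ℂ) (j : ℕ) (hj : j ≤ 2 * l) :
    dN l c (2 * l - j) = dN l c j := by
  unfold dN
  simp only [show min (2 * l - j) (2 * l - (2 * l - j)) = min j (2 * l - j) from by omega]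

lemma sum_dN (l : ℕ) (c : Fin l → ℂ) :
    ∑ j ∈ Finset.range l, dN l c j = ∑ i, c i := by
  rw [← Fin.sum_univ_eq_sum_range (dN l c) l]
  refine Finset.sum_congr rfl fun i _ => ?_
  rw [dN_lt l c i.val i.isLt]

lemma trace_dN (l : ℕ) (c : Fin l → ℂ) :
    ∑ j ∈ Finset.range (2 * l + 1), dN l c j = 0 := by
  have h2l : 2 * l + 1 = l + (1 + l) := by omega
  rw [h2l, Finset.sum_range_add, Finset.sum_range_add, Finset.sum_range_one]
  have e1 : ∑ j ∈ Finset.range l, dN l c (l + (1 + j)) =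
      ∑ j ∈ Finset.range l, dN l c j := by
    rw [← Finset.sum_range_reflect (dN l c) l]
    refine Finset.sum_congr rfl fun j hj => ?_
    rw [Finset.mem_range] at hj
    have : l + (1 + j) = 2 * l - (l - 1 - j) := by omega
    rw [this, dN_symm l c _ (by omega)]
  rw [e1, sum_dN, Nat.add_zero, dN_mid]
  ring

def bigX (l : ℕ) (c : Fin l → ℂ) : Matrix (Fin (2 * l + 1)) (Fin (2 * l + 1)) ℂ :=
  Matrix.diagonal (fun p => dN l c p.val)

lemma bigX_mem (l : ℕ) (c : Fin l → ℂ) : bigX l c ∈ zeroWt (2 * l + 1) := by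
  rw [mem_zeroWt_iff]
  refine ⟨⟨?_, ?_⟩, ?_⟩
  · rw [bigX, Matrix.trace_diagonal,
      Fin.sum_univ_eq_sum_range (dN l c) (2 * l + 1), trace_dN]
  · ext p q
    rw [Matrix.add_apply, nuLin_apply, Matrix.zero_apply]
    rcases eq_or_ne p q with h | h
    · subst h
      rw [bigX, Matrix.diagonal_apply_eq, Matrix.diagonal_apply_eq]
      have hpow : ((-1 : ℂ)) ^ (p.val + p.val) = 1 := Even.neg_one_pow ⟨p.val, by ring⟩
      rw [hpow]
      have hrv : (p.rev : ℕ) = 2 * l - p.val := by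
        rw [Fin.val_rev]; omega
      rw [hrv, dN_symm l c p.val (by have := p.isLt; omega)]
      ring
    · have hne : q.rev ≠ p.rev := fun hc => h (Fin.rev_injective hc).symm
      rw [bigX, Matrix.diagonal_apply_ne _ hne, Matrix.diagonal_apply_ne _ h]
      ring
  · intro h hh
    rw [mem_h0_iff] at hh
    obtain ⟨hd, -, -⟩ := hh
    rw [bigX, ← hd.diagonal_diag, Matrix.diagonal_mul_diagonal,
      Matrix.diagonal_mul_diagonal]
    ext p q
    rcases eq_or_ne p q with hpq | hpq
    · subst hpq
      rw [Matrix.diagonal_apply_eq, Matrix.diagonal_apply_eq]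
      ring
    · rw [Matrix.diagonal_apply_ne _ hpq, Matrix.diagonal_apply_ne _ hpq]

lemma zeroWt_eq_zero (l : ℕ) (hl : 0 < l) (x : Matrix (Fin (2*l+1)) (Fin (2*l+1)) ℂ)
    (hx : x ∈ zeroWt (2 * l + 1))
    (hz : ∀ j : Fin l, x ⟨j.val, by omega⟩ ⟨j.val, by omega⟩ = 0) : x = 0 := by
  have hlt : ∀ p : Fin (2 * l + 1), p.val < l → x p p = 0 := by
    intro p hp
    have h := hz ⟨p.val, hp⟩
    have hcast : (⟨p.val, by omega⟩ : Fin (2 * l + 1)) = p := Fin.ext rfl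
    rwa [hcast] at h
  have hgt : ∀ p : Fin (2 * l + 1), l < p.val → x p p = 0 := by
    intro p hp
    rw [zeroWt_symm l x hx p]
    apply hlt
    rw [Fin.val_rev]
    have := p.isLt
    omega
  have hne0 : ∀ p : Fin (2 * l + 1), p.val ≠ l → x p p = 0 := by
    intro p hp
    rcases Nat.lt_or_ge p.val l with h | h
    · exact hlt p h
    · exact hgt p (by omega)
  have htr : x.trace = 0 := ((mem_zeroWt_iff _ x).mp hx).1.1
  have hmid : x ⟨l, by omega⟩ ⟨l, by omega⟩ = 0 := by
    have hsum : x.trace = x ⟨l, by omega⟩ ⟨l, by omega⟩ := by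
      rw [Matrix.trace]
      rw [Finset.sum_eq_single (⟨l, by omega⟩ : Fin (2 * l + 1))]
      · rfl
      · intro b _ hb
        exact hne0 b (fun hc => hb (Fin.ext hc))
      · simp
    rw [← hsum, htr]
  ext p q
  rw [Matrix.zero_apply]
  rcases eq_or_ne p q with h | h
  · subst h
    rcases eq_or_ne p.val l with h2 | h2
    · have : p = (⟨l, by omega⟩ : Fin (2 * l + 1)) := Fin.ext h2
      rw [this]
      exact hmid
    · exact hne0 p h2
  · exact zeroWt_offdiag l hl x hx p q h

def G (l : ℕ) : (zeroWt (2 * l + 1)) →ₗ[ℂ] (Fin l → ℂ) where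
  toFun x := fun i =>
    (x : Matrix (Fin (2*l+1)) (Fin (2*l+1)) ℂ) ⟨i.val, by omega⟩ ⟨i.val, by omega⟩
  map_add' x y := rfl
  map_smul' c x := rfl

lemma G_bijective (l : ℕ) (hl : 0 < l) : Function.Bijective (G l) := by
  constructor
  · rw [← LinearMap.ker_eq_bot, LinearMap.ker_eq_bot']
    intro x hxz
    have hz : ∀ j : Fin l,
        (x : Matrix (Fin (2*l+1)) (Fin (2*l+1)) ℂ) ⟨j.val, by omega⟩ ⟨j.val, by omega⟩
          = 0 := fun j => congrFun hxz j
    ext1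
    exact zeroWt_eq_zero l hl x.val x.property hz
  · intro c
    refine ⟨⟨bigX l c, bigX_mem l c⟩, ?_⟩
    funext i
    show bigX l c ⟨i.val, by omega⟩ ⟨i.val, by omega⟩ = c i
    rw [bigX, Matrix.diagonal_apply_eq]
    simp only [Fin.val_mk]
    rw [dN_lt l c i.val i.isLt]

end ZWaux

/-- the zero-weight space of `g¹` with respect to `h⁰` has
dimension `l`. -/
theorem dim_zero_weight_space_g1 (l : ℕ) (hl : 0 < l) :
    Module.finrank ℂ (zeroWt (2 * l + 1)) = l := by
  have e := LinearEquiv.ofBijective (ZWaux.G l) (ZWaux.G_bijective l hl)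
  rw [e.finrank_eq]
  simp
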